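/- Let B = (b_{ij}) be an n×n skew-symmetrizable integer matrix with b_{ij} ≥ 0 whenever i < j, let A be its Cartan companion, and let S_i be the simple reflections of A acting on the weight lattice. For p ≥ 1 let k(p) := ⟨n − p + 1⟩ (so the sequence k(1), k(2), … is n, n−1, …, 1, n, n−1, …), and for p ≥ 0 set S'^{(p)} := S_{k(1)}∘⋯∘S_{k(p)}. Let R'_i(e_j) = e_j − a_{ji} e_i be the simple reflections of Aᵀ (the Cartan companion of −Bᵀ) acting on the root lattice, and assume that for every p ≥ 1 all coordinates of R'_{k(1)}∘⋯∘R'_{k(p−1)}(e_{k(p)}) are nonnegative. Define 2n×n integer matrices by N_0 := the block matrix with −Bᵀ on top of the n×n identity matrix and N_m := μ_{k(m)}(N_{m−1}) for m ≥ 1, and let C_m denote the bottom n×n submatrix of N_m. Then for every m ≥ 0, C_m is invertible over ℤ and the i-th column of (C_mᵀ)^{−1} equals: e_i if 0 ≤ m ≤ n and i ≤ n − m; −e_i if 0 ≤ m ≤ n and i > n − m; and −S'^{(m−n)}(e_i) if m > n (i.e., the g-vector ω_{i;t_{−m}} equals −c^{−∞}_{≤m−n} ω_i for m > n). -/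

import Mathlib

open Finset Matrix

/-- The simple reflection `s_i` of the Weyl group of `A` acting on the root lattice
in the basis of simple roots: `R_i(e_j) = e_j - a_{ij} e_i`. -/
def Rmap {n : ℕ} (A : Matrix (Fin n) (Fin n) ℤ) (i : Fin n) (v : Fin n → ℤ) : Fin n → ℤ :=
  v - (∑ j, A i j * v j) • Pi.single i (1 : ℤ)

/-- The simple reflection `s_i` acting on the weight lattice in the basis of
fundamental weights. -/
def Smap {n : ℕ} (A : Matrix (Fin n) (Fin n) ℤ) (i : Fin n) (v : Fin n → ℤ) : Fin n → ℤ :=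
  v - (v i) • (fun ℓ => A ℓ i)

/-- `⟨m⟩ ∈ {1, …, n}` (0-indexed as an element of `Fin n`): the unique element of
`{1, …, n}` congruent to `m` modulo `n`. -/
def idx (n : ℕ) (hn : 0 < n) (m : ℤ) : Fin n :=
  ⟨((m - 1) % (n : ℤ)).toNat, by
    have h0 : (0 : ℤ) < (n : ℤ) := Int.natCast_pos.mpr hn
    have h1 : 0 ≤ (m - 1) % (n : ℤ) := Int.emod_nonneg _ (ne_of_gt h0)
    have h2 : (m - 1) % (n : ℤ) < (n : ℤ) := Int.emod_lt_of_pos _ h0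
    omega⟩

/-- `k(p) = ⟨n − p + 1⟩`, so that `k(1), k(2), …` is `n, n−1, …, 1, n, n−1, …`. -/
def kfun (n : ℕ) (hn : 0 < n) (p : ℕ) : Fin n :=
  idx n hn ((n : ℤ) - (p : ℤ) + 1)

/-- `B` is skew-symmetrizable: `DB` is skew-symmetric for some diagonal `D` with
positive diagonal entries. -/
def IsSkewSymmetrizable {n : ℕ} (B : Matrix (Fin n) (Fin n) ℤ) : Prop :=
  ∃ d : Fin n → ℚ, (∀ i, 0 < d i) ∧ ∀ i j, d i * (B i j : ℚ) = -(d j * (B j i : ℚ))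

/-- The Cartan companion of `B`: `a_{ii} = 2`, `a_{ij} = −|b_{ij}|` for `i ≠ j`. -/
def cartanCompanion {n : ℕ} (B : Matrix (Fin n) (Fin n) ℤ) : Matrix (Fin n) (Fin n) ℤ :=
  Matrix.of fun i j => if i = j then 2 else -|B i j|

/-- Matrix mutation `μ_k` of a `2n×n` exchange matrix (rows `Sum.inl` form the
principal part; the row with the same index as column `k` is `Sum.inl k`). -/
def mutate {n : ℕ} (k : Fin n) (M : Matrix (Fin n ⊕ Fin n) (Fin n) ℤ) :
    Matrix (Fin n ⊕ Fin n) (Fin n) ℤ :=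
  Matrix.of fun i j =>
    if i = Sum.inl k ∨ j = k then -M i j
    else M i j + max (M i k) 0 * max (M (Sum.inl k) j) 0
        - max (-M i k) 0 * max (-M (Sum.inl k) j) 0

/-- The initial exchange matrix with principal coefficients: `B` on top of the
identity matrix. -/
def initialM {n : ℕ} (B : Matrix (Fin n) (Fin n) ℤ) : Matrix (Fin n ⊕ Fin n) (Fin n) ℤ :=
  Matrix.of fun i j => Sum.elim (fun r => B r j) (fun r => if r = j then 1 else 0) i

/-- `N_m`: iterated mutation of the principal-coefficients exchange matrix along the
sequence of directions `k(1), k(2), …` (i.e. `n, n−1, …, 1, n, n−1, …`). -/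
def Nseq {n : ℕ} (hn : 0 < n) (B : Matrix (Fin n) (Fin n) ℤ) :
    ℕ → Matrix (Fin n ⊕ Fin n) (Fin n) ℤ
  | 0 => initialM B
  | m + 1 => mutate (kfun n hn (m + 1)) (Nseq hn B m)

/-- `R'^{(p)} = R_{k(1)}∘⋯∘R_{k(p)}` on the root lattice. -/
def Rseq' {n : ℕ} (hn : 0 < n) (A : Matrix (Fin n) (Fin n) ℤ) (p : ℕ) (v : Fin n → ℤ) :
    Fin n → ℤ :=
  (List.range p).foldr (fun t w => Rmap A (kfun n hn (t + 1)) w) v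

/-- `S'^{(p)} = S_{k(1)}∘⋯∘S_{k(p)}` on the weight lattice. -/
def Sseq' {n : ℕ} (hn : 0 < n) (A : Matrix (Fin n) (Fin n) ℤ) (p : ℕ) (v : Fin n → ℤ) :
    Fin n → ℤ :=
  (List.range p).foldr (fun t w => Smap A (kfun n hn (t + 1)) w) v

/-!
Let `Q = -Bᵀ`, so that every arrow of its quiver goes from a smaller to a larger vertex. Then
`k = k(m + 1)` is a sink of the `m`-th mutated quiver: by induction the principal part of `N_m`
is `D_m Q D_m` for a diagonal sign matrix `D_m`, and its row `k` is `(-|q_{k j}|)_j`. Mutating at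
a sink only flips signs in the principal part; in the coefficient part `C` it negates column `k`
and adds `-[-c_{r k}]_+ |q_{k j}|` to every other entry `c_{r j}`. For `m ≤ n` column `k` is
`e_k`, so `C` stays a diagonal sign matrix. From `m = n` on, the positivity hypothesis says that
column `k` is `≤ 0`, and the step turns the columns `-R'^{(p)}(e_j)` into
`-R'^{(p)}(R'_k e_j) = -R'^{(p+1)}(e_j)`. Finally `⟨R'_k u, S_k v⟩ = ⟨u, v⟩` because
`a_{kk} = 2`, which identifies `(C_mᵀ)⁻¹`.
-/

section KIndex

variable {n : ℕ} (hn : 0 < n)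

lemma kfun_val_cast (p : ℕ) : ((kfun n hn p : ℕ) : ℤ) = ((n : ℤ) - p) % n := by
  simp only [kfun, idx, add_sub_cancel_right]
  exact Int.toNat_of_nonneg (Int.emod_nonneg _ (by omega))

lemma kfun_add_self (p : ℕ) : kfun n hn (p + n) = kfun n hn p := by
  refine Fin.ext (Int.ofNat_inj.mp ?_)
  rw [kfun_val_cast, kfun_val_cast, Nat.cast_add,
    show (n : ℤ) - (p + n) = (n - p) + n * (-1) by ring, Int.add_mul_emod_self_left]

lemma kfun_succ_val_of_lt {m : ℕ} (hm : m < n) : (kfun n hn (m + 1) : ℕ) = n - 1 - m := by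
  have h := kfun_val_cast hn (m + 1)
  rw [Int.emod_eq_of_lt (by omega) (by omega)] at h
  omega

lemma kfun_succ_val (p : ℕ) :
    (kfun n hn (p + 1) : ℕ) = if (kfun n hn p : ℕ) = 0 then n - 1 else kfun n hn p - 1 := by
  have hx := kfun_val_cast hn p
  have hy := kfun_val_cast hn (p + 1)
  have hlt := (kfun n hn p).isLt
  have hshift : (n : ℤ) - (p + 1 : ℕ) = ((kfun n hn p : ℕ) - 1) + n * (((n : ℤ) - p) / n) := by
    have := Int.emod_add_mul_ediv ((n : ℤ) - p) n
    push_cast; omega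
  rw [hshift, Int.add_mul_emod_self_left] at hy
  split_ifs with h0
  · rw [h0, show ((0 : ℕ) : ℤ) - 1 = (n - 1) + n * (-1) by push_cast; ring,
      Int.add_mul_emod_self_left, Int.emod_eq_of_lt (by omega) (by omega)] at hy
    omega
  · rw [Int.emod_eq_of_lt (by omega) (by omega)] at hy
    omega

end KIndex

section Reflections

variable {n : ℕ} (A : Matrix (Fin n) (Fin n) ℤ)

lemma Rmap_add (i : Fin n) (u v : Fin n → ℤ) : Rmap A i (u + v) = Rmap A i u + Rmap A i v := by
  change u + v - (A i ⬝ᵥ (u + v)) • _ = (u - (A i ⬝ᵥ u) • _) + (v - (A i ⬝ᵥ v) • _)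
  rw [dotProduct_add, add_smul]
  abel

lemma Rmap_smul (i : Fin n) (c : ℤ) (v : Fin n → ℤ) : Rmap A i (c • v) = c • Rmap A i v := by
  change c • v - (A i ⬝ᵥ (c • v)) • _ = c • (v - (A i ⬝ᵥ v) • _)
  rw [dotProduct_smul, smul_eq_mul, mul_smul, smul_sub]

lemma Rmap_single (k j : Fin n) :
    Rmap A k (Pi.single j 1) = Pi.single j 1 - A k j • Pi.single k 1 := by
  change _ - (A k ⬝ᵥ Pi.single j 1) • _ = _
  rw [dotProduct_single, mul_one]

lemma Rmap_transpose_dotProduct_Smap {k : Fin n} (hk : A k k = 2) (u v : Fin n → ℤ) :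
    Rmap Aᵀ k u ⬝ᵥ Smap A k v = u ⬝ᵥ v := by
  change (u - ((fun l => A l k) ⬝ᵥ u) • Pi.single k 1) ⬝ᵥ (v - v k • fun l => A l k) = _
  simp only [sub_dotProduct, dotProduct_sub, smul_dotProduct, dotProduct_smul, single_dotProduct,
    smul_eq_mul, hk]
  rw [dotProduct_comm (fun l => A l k) u]
  ring

variable {A} (hn : 0 < n)

lemma Rseq'_succ (p : ℕ) (v : Fin n → ℤ) :
    Rseq' hn A (p + 1) v = Rseq' hn A p (Rmap A (kfun n hn (p + 1)) v) := by
  simp [Rseq', List.range_succ, List.foldr_append]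

lemma Sseq'_succ (p : ℕ) (v : Fin n → ℤ) :
    Sseq' hn A (p + 1) v = Sseq' hn A p (Smap A (kfun n hn (p + 1)) v) := by
  simp [Sseq', List.range_succ, List.foldr_append]

lemma Rseq'_add (p : ℕ) (u v : Fin n → ℤ) :
    Rseq' hn A p (u + v) = Rseq' hn A p u + Rseq' hn A p v := by
  induction p generalizing u v with
  | zero => rfl
  | succ p ih => rw [Rseq'_succ, Rseq'_succ, Rseq'_succ, Rmap_add, ih]

lemma Rseq'_smul (p : ℕ) (c : ℤ) (v : Fin n → ℤ) :
    Rseq' hn A p (c • v) = c • Rseq' hn A p v := by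
  induction p generalizing v with
  | zero => rfl
  | succ p ih => rw [Rseq'_succ, Rseq'_succ, Rmap_smul, ih]

lemma Rseq'_transpose_dotProduct_Sseq' (hA : ∀ k, A k k = 2) (p : ℕ) (u v : Fin n → ℤ) :
    Rseq' hn Aᵀ p u ⬝ᵥ Sseq' hn A p v = u ⬝ᵥ v := by
  induction p generalizing u v with
  | zero => rfl
  | succ p ih => rw [Rseq'_succ, Sseq'_succ, ih, Rmap_transpose_dotProduct_Smap A (hA _)]

end Reflections

section SignOrdered

variable {n : ℕ}

/-- Every arrow of the quiver of `Q` points from a smaller to a larger vertex. -/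
def IsSignOrdered (Q : Matrix (Fin n) (Fin n) ℤ) : Prop :=
  ∀ i j, i ≤ j → Q j i ≤ 0 ∧ 0 ≤ Q i j

lemma IsSignOrdered.apply_self {Q : Matrix (Fin n) (Fin n) ℤ} (hQ : IsSignOrdered Q) (i : Fin n) :
    Q i i = 0 :=
  le_antisymm (hQ i i le_rfl).1 (hQ i i le_rfl).2

lemma IsSkewSymmetrizable.apply_self {B : Matrix (Fin n) (Fin n) ℤ} (hB : IsSkewSymmetrizable B)
    (i : Fin n) : B i i = 0 := by
  obtain ⟨d, hd, hskew⟩ := hB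
  have h := hskew i i
  have hdi := hd i
  exact_mod_cast (show (B i i : ℚ) = 0 by nlinarith)

lemma IsSkewSymmetrizable.nonpos_of_nonneg {B : Matrix (Fin n) (Fin n) ℤ}
    (hB : IsSkewSymmetrizable B) {i j : Fin n} (hij : 0 ≤ B i j) : B j i ≤ 0 := by
  obtain ⟨d, hd, hskew⟩ := hB
  have h := hskew i j
  have hdi := hd i
  have hdj := hd j
  have hij' : (0 : ℚ) ≤ B i j := by exact_mod_cast hij
  exact_mod_cast (show (B j i : ℚ) ≤ 0 by nlinarith)

lemma IsSkewSymmetrizable.isSignOrdered_neg_transpose {B : Matrix (Fin n) (Fin n) ℤ}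
    (hB : IsSkewSymmetrizable B) (hacyclic : ∀ i j : Fin n, i < j → 0 ≤ B i j) :
    IsSignOrdered (-Bᵀ) := by
  intro i j hij
  have hnonneg : 0 ≤ B i j := by
    rcases hij.lt_or_eq with hlt | rfl
    · exact hacyclic i j hlt
    · exact (hB.apply_self i).ge
  simpa using ⟨hnonneg, hB.nonpos_of_nonneg hnonneg⟩

lemma cartanCompanion_neg_transpose (B : Matrix (Fin n) (Fin n) ℤ) :
    cartanCompanion (-Bᵀ) = (cartanCompanion B)ᵀ := by
  ext i j
  simp [cartanCompanion, eq_comm]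

end SignOrdered

section Mutation

variable {n : ℕ}

lemma mutate_apply_of_row_nonpos {k : Fin n} {M : Matrix (Fin n ⊕ Fin n) (Fin n) ℤ}
    (hrow : ∀ j, M (.inl k) j ≤ 0) {i : Fin n ⊕ Fin n} {j : Fin n} (hi : i ≠ .inl k) (hj : j ≠ k) :
    mutate k M i j = M i j - max (-M i k) 0 * -M (.inl k) j := by
  simp [mutate, hi, hj, max_eq_right (hrow j), max_eq_left (neg_nonneg.2 (hrow j))]

lemma mutate_apply_of_eq {k : Fin n} {M : Matrix (Fin n ⊕ Fin n) (Fin n) ℤ}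
    {i : Fin n ⊕ Fin n} {j : Fin n} (h : i = .inl k ∨ j = k) : mutate k M i j = -M i j := by
  simp [mutate, h]

end Mutation

section PrincipalPart

variable {n : ℕ} (hn : 0 < n)

/-- After `m` steps, the vertices above `k(m + 1)` have been mutated once more than the others. -/
def mutationSign (m : ℕ) (i : Fin n) : ℤ :=
  if kfun n hn (m + 1) < i then -1 else 1

lemma mutationSign_zero (i : Fin n) : mutationSign hn 0 i = 1 := by
  have hk := kfun_succ_val_of_lt hn hn
  have hi := i.isLt
  simp only [mutationSign, Fin.lt_def]
  rw [if_neg (by omega)]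

lemma mutationSign_kfun (m : ℕ) : mutationSign hn m (kfun n hn (m + 1)) = 1 := by
  simp [mutationSign]

lemma mutationSign_succ_mul (m : ℕ) (i j : Fin n) :
    mutationSign hn (m + 1) i * mutationSign hn (m + 1) j =
      mutationSign hn m i * mutationSign hn m j *
        ((if i = kfun n hn (m + 1) then -1 else 1) *
          (if j = kfun n hn (m + 1) then -1 else 1)) := by
  have hk := kfun_succ_val hn (m + 1)
  simp only [mutationSign, Fin.lt_def, Fin.ext_iff]
  split_ifs at hk ⊢ <;> omega

variable {hn} {Q : Matrix (Fin n) (Fin n) ℤ}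

lemma mutationSign_mul_kfun_row (hQ : IsSignOrdered Q) (m : ℕ) (j : Fin n) :
    mutationSign hn m j * Q (kfun n hn (m + 1)) j = -|Q (kfun n hn (m + 1)) j| := by
  unfold mutationSign
  split_ifs with h
  · rw [abs_of_nonneg (hQ _ _ h.le).2]; ring
  · rw [abs_of_nonpos (hQ _ _ (not_lt.1 h)).1]; ring

lemma mutationSign_mul_kfun_col (hQ : IsSignOrdered Q) (m : ℕ) (i : Fin n) :
    mutationSign hn m i * Q i (kfun n hn (m + 1)) = |Q i (kfun n hn (m + 1))| := by
  unfold mutationSign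
  split_ifs with h
  · rw [abs_of_nonpos (hQ _ _ h.le).1]; ring
  · rw [abs_of_nonneg (hQ _ _ (not_lt.1 h)).2]; ring

theorem Nseq_inl (hQ : IsSignOrdered Q) (m : ℕ) (i j : Fin n) :
    Nseq hn Q m (.inl i) j = mutationSign hn m i * mutationSign hn m j * Q i j := by
  induction m generalizing i j with
  | zero => simp [Nseq, initialM, mutationSign_zero]
  | succ m ih =>
    set k := kfun n hn (m + 1)
    have hrow : ∀ j, Nseq hn Q m (.inl k) j = -|Q k j| := fun j => by
      rw [ih, mutationSign_kfun, one_mul, mutationSign_mul_kfun_row hQ]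
    have hcol : ∀ i, Nseq hn Q m (.inl i) k = |Q i k| := fun i => by
      rw [ih, mutationSign_kfun, mul_one, mutationSign_mul_kfun_col hQ]
    rw [Nseq, mutationSign_succ_mul]
    by_cases h : i = k ∨ j = k
    · rw [mutate_apply_of_eq (by simpa using h), ih]
      by_cases hij : i = k ∧ j = k
      · simp [hij, hQ.apply_self]
      · have hflip : (if i = k then -1 else 1) * (if j = k then -1 else 1) = (-1 : ℤ) := by
          split_ifs <;> simp_all
        rw [hflip]
        ring
    · obtain ⟨hi, hj⟩ := not_or.1 h
      have hrow_nonpos : ∀ j, Nseq hn Q m (.inl k) j ≤ 0 := fun j => by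
        rw [hrow]; exact neg_nonpos.2 (abs_nonneg _)
      rw [mutate_apply_of_row_nonpos hrow_nonpos (by simpa using hi) hj, hcol, ih,
        if_neg hi, if_neg hj, max_eq_right (neg_nonpos.2 (abs_nonneg _))]
      ring

lemma Nseq_inl_kfun (hQ : IsSignOrdered Q) (m : ℕ) (j : Fin n) :
    Nseq hn Q m (.inl (kfun n hn (m + 1))) j = -|Q (kfun n hn (m + 1)) j| := by
  rw [Nseq_inl hQ, mutationSign_kfun, one_mul, mutationSign_mul_kfun_row hQ]

lemma Nseq_inl_kfun_nonpos (hQ : IsSignOrdered Q) (m : ℕ) (j : Fin n) :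
    Nseq hn Q m (.inl (kfun n hn (m + 1))) j ≤ 0 := by
  rw [Nseq_inl_kfun hQ]
  exact neg_nonpos.2 (abs_nonneg _)

end PrincipalPart

section CoefficientPart

variable {n : ℕ} {hn : 0 < n} {Q : Matrix (Fin n) (Fin n) ℤ}

theorem Nseq_inr_of_le (hQ : IsSignOrdered Q) {m : ℕ} (hm : m ≤ n) (r i : Fin n) :
    Nseq hn Q m (.inr r) i =
      diagonal (fun i : Fin n => if (i : ℕ) + 1 ≤ n - m then 1 else -1) r i := by
  induction m generalizing i with
  | zero =>
    have := r.isLt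
    simp only [Nseq, initialM, of_apply, Sum.elim_inr, diagonal_apply]
    split_ifs <;> omega
  | succ m ih =>
    have hk := kfun_succ_val_of_lt hn (show m < n by omega)
    rw [Nseq]
    by_cases hik : i = kfun n hn (m + 1)
    · rw [hik, mutate_apply_of_eq (Or.inr rfl), ih (by omega)]
      simp only [diagonal_apply, Fin.ext_iff]
      split_ifs <;> omega
    · have hcoef : 0 ≤ Nseq hn Q m (.inr r) (kfun n hn (m + 1)) := by
        rw [ih (by omega), diagonal_apply]
        split_ifs <;> omega
      rw [mutate_apply_of_row_nonpos (Nseq_inl_kfun_nonpos hQ m) (by simp) hik,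
        max_eq_right (neg_nonpos.2 hcoef), zero_mul, sub_zero, ih (by omega)]
      simp only [diagonal_apply, Fin.ext_iff] at hik ⊢
      split_ifs <;> omega

theorem Nseq_inr_of_ge (hQ : IsSignOrdered Q)
    (hpos : ∀ p r, 0 ≤ Rseq' hn (cartanCompanion Q) p (Pi.single (kfun n hn (p + 1)) 1) r)
    {m : ℕ} (hm : n ≤ m) (r i : Fin n) :
    Nseq hn Q m (.inr r) i = -Rseq' hn (cartanCompanion Q) (m - n) (Pi.single i 1) r := by
  induction m, hm using Nat.le_induction generalizing i with
  | base =>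
    rw [Nseq_inr_of_le hQ le_rfl, diagonal_apply]
    by_cases hri : r = i <;> simp [Rseq', hri]
  | succ m hm ih =>
    set k := kfun n hn (m + 1)
    have hk : kfun n hn (m - n + 1) = k := by
      rw [← kfun_add_self hn (m - n + 1), show m - n + 1 + n = m + 1 by omega]
    rw [Nseq, show m + 1 - n = m - n + 1 by omega, Rseq'_succ, hk]
    by_cases hik : i = k
    · have hreflect : Rmap (cartanCompanion Q) k (Pi.single k 1) = (-1 : ℤ) • Pi.single k 1 := by
        rw [Rmap_single, show cartanCompanion Q k k = 2 by simp [cartanCompanion], two_smul]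
        abel
      rw [hik, mutate_apply_of_eq (Or.inr rfl), ih, hreflect, Rseq'_smul, Pi.smul_apply,
        neg_one_smul, neg_neg]
    · have hreflect : Rmap (cartanCompanion Q) k (Pi.single i 1) =
          Pi.single i 1 + |Q k i| • Pi.single k 1 := by
        rw [Rmap_single, show cartanCompanion Q k i = -|Q k i| by
          simp [cartanCompanion, Ne.symm hik], neg_smul, sub_neg_eq_add]
      have hcoef : 0 ≤ Rseq' hn (cartanCompanion Q) (m - n) (Pi.single k 1) r := hk ▸ hpos (m - n) r
      rw [mutate_apply_of_row_nonpos (Nseq_inl_kfun_nonpos hQ m) (by simp) hik, ih, ih,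
        Nseq_inl_kfun hQ, neg_neg, neg_neg, max_eq_left hcoef, hreflect, Rseq'_add, Rseq'_smul]
      simp only [Pi.add_apply, Pi.smul_apply, smul_eq_mul]
      ring

end CoefficientPart

lemma of_ite_single_eq_diagonal {n : ℕ} {R : Type*} [Ring R] (p : Fin n → Prop)
    [DecidablePred p] :
    (Matrix.of fun r i =>
        if p i then (Pi.single i 1 : Fin n → R) r else -(Pi.single i 1 : Fin n → R) r) =
      diagonal fun i => if p i then 1 else -1 := by
  ext r i
  by_cases hri : r = i <;> by_cases hp : p i <;> simp [Pi.single_apply, hri, hp]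

/-- The c-vector matrices `C_m = C^{−Bᵀ}_{t_{−m}}` are invertible over `ℤ` and the
`i`-th column of `(C_mᵀ)^{−1}` is `e_i` (resp. `−e_i`) if `m ≤ n` and `i ≤ n−m`
(resp. `i > n−m`), and `−S'^{(m−n)}(e_i)` if `m > n`; i.e. the g-vector
`ω_{i;t_{−m}}` equals `−c^{−∞}_{≤m−n} ω_i` for `m > n`. -/
theorem statement11 (n : ℕ) (hn : 0 < n) (B : Matrix (Fin n) (Fin n) ℤ)
    (hskew : IsSkewSymmetrizable B)
    (hacyclic : ∀ i j : Fin n, i < j → 0 ≤ B i j)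
    (hred : ∀ p : ℕ, 1 ≤ p → ∀ r : Fin n,
      0 ≤ Rseq' hn (cartanCompanion B)ᵀ (p - 1) (Pi.single (kfun n hn p) (1 : ℤ)) r) :
    ∀ m : ℕ,
      (Matrix.of fun r i : Fin n => Nseq hn (-Bᵀ) m (Sum.inr r) i)ᵀ *
          (Matrix.of fun r i : Fin n =>
            if m ≤ n then
              (if (i : ℕ) + 1 ≤ n - m then (Pi.single i (1 : ℤ) : Fin n → ℤ) r
               else -(Pi.single i (1 : ℤ) : Fin n → ℤ) r)
            else -Sseq' hn (cartanCompanion B) (m - n) (Pi.single i (1 : ℤ)) r) = 1 ∧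
      (Matrix.of fun r i : Fin n =>
            if m ≤ n then
              (if (i : ℕ) + 1 ≤ n - m then (Pi.single i (1 : ℤ) : Fin n → ℤ) r
               else -(Pi.single i (1 : ℤ) : Fin n → ℤ) r)
            else -Sseq' hn (cartanCompanion B) (m - n) (Pi.single i (1 : ℤ)) r) *
          (Matrix.of fun r i : Fin n => Nseq hn (-Bᵀ) m (Sum.inr r) i)ᵀ = 1 := by
  have hQ := hskew.isSignOrdered_neg_transpose hacyclic
  intro m
  refine (and_iff_left_of_imp mul_eq_one_comm.mp).2 ?_
  rcases le_or_gt m n with hm | hm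
  · simp only [hm, ↓reduceIte, of_ite_single_eq_diagonal]
    rw [show (Matrix.of fun r i => Nseq hn (-Bᵀ) m (.inr r) i) = _ from
      Matrix.ext (Nseq_inr_of_le hQ hm), diagonal_transpose, diagonal_mul_diagonal, ← diagonal_one]
    congr 1
    ext i
    split_ifs <;> norm_num
  · have hpos : ∀ p r,
        0 ≤ Rseq' hn (cartanCompanion (-Bᵀ)) p (Pi.single (kfun n hn (p + 1)) 1) r := fun p r => by
      simpa [cartanCompanion_neg_transpose] using hred (p + 1) (by omega) r
    have hC := Nseq_inr_of_ge hQ hpos hm.le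
    rw [cartanCompanion_neg_transpose] at hC
    ext i j
    simp only [not_le.2 hm, ↓reduceIte, mul_apply, transpose_apply, of_apply, hC, neg_mul_neg]
    change Rseq' hn _ _ _ ⬝ᵥ Sseq' hn _ _ _ = _
    rw [Rseq'_transpose_dotProduct_Sseq' hn (fun k => by simp [cartanCompanion]),
      single_dotProduct, one_mul, Pi.single_apply, one_apply, eq_comm]
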